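/- If K < (1/2)(1 + 1/μ(A)), then for each y ∈ ℝᵐ there exists at most one K-sparse vector x with A x = y. -/

import Mathlib

/-- The number of nonzero entries of a vector (its ℓ⁰ "norm"). -/
noncomputable def sparseCount {n : ℕ} (x : Fin n → ℝ) : ℕ :=
  (Finset.univ.filter (fun i => x i ≠ 0)).card

/-!
If two `K`-sparse solutions differed, their difference `z` would be a nonzero vector in the kernel
of `A` supported on `s ≤ 2K` coordinates. The Gram matrix `AᵀA` has unit diagonal and off-diagonal
entries bounded by `μ`, so `0 = ‖Az‖² = zᵀAᵀAz ≥ (1 + μ)‖z‖₂² - μ‖z‖₁² ≥ (1 + μ - μs)‖z‖₂²`,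
the last step by Cauchy–Schwarz on the support. Hence `1 + μ ≤ μs ≤ 2Kμ`, i.e. `K ≥ (1 + 1/μ)/2`.
-/

open Finset Matrix

lemma sparseCount_sub_le {n : ℕ} (x y : Fin n → ℝ) :
    sparseCount (x - y) ≤ sparseCount x + sparseCount y := by
  unfold sparseCount
  refine (card_le_card fun i hi => ?_).trans (card_union_le _ _)
  simp only [mem_union, mem_filter, mem_univ, true_and, Pi.sub_apply] at hi ⊢
  by_contra! h
  exact hi (by rw [h.1, h.2, sub_self])

lemma sq_sum_abs_le_sparseCount_mul_sum_sq {n : ℕ} (z : Fin n → ℝ) :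
    (∑ i, |z i|) ^ 2 ≤ sparseCount z * ∑ i, z i ^ 2 := by
  have hsupp : ∀ f : ℝ → ℝ, f 0 = 0 → ∑ i, f (z i) = ∑ i ∈ univ.filter (z · ≠ 0), f (z i) := by
    intro f hf
    rw [sum_filter]
    exact sum_congr rfl fun i _ => by by_cases h : z i = 0 <;> simp [h, hf]
  rw [hsupp _ abs_zero, hsupp (· ^ 2) (zero_pow two_ne_zero)]
  simp_rw [← sq_abs (z _)]
  exact sq_sum_le_card_mul_sum_sq

lemma le_dotProduct_mulVec_of_unit_diag_of_abs_offDiag_le {ι : Type*} [Fintype ι]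
    (G : Matrix ι ι ℝ) (μ : ℝ) (hdiag : ∀ i, G i i = 1) (hoff : ∀ i j, i ≠ j → |G i j| ≤ μ)
    (z : ι → ℝ) :
    (1 + μ) * ∑ i, z i ^ 2 - μ * (∑ i, |z i|) ^ 2 ≤ z ⬝ᵥ (G *ᵥ z) := by
  classical
  have hterm : ∀ i j, (if i = j then (1 + μ) * z i ^ 2 else 0) - μ * (|z i| * |z j|)
      ≤ z i * (G i j * z j) := by
    intro i j
    by_cases hij : i = j
    · subst hij
      rw [if_pos rfl, hdiag, abs_mul_abs_self]
      exact le_of_eq (by ring)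
    · simp only [hij, if_false, zero_sub, neg_le]
      calc -(z i * (G i j * z j)) ≤ |z i * (G i j * z j)| := neg_le_abs _
        _ = |G i j| * (|z i| * |z j|) := by rw [abs_mul, abs_mul]; ring
        _ ≤ μ * (|z i| * |z j|) := by gcongr; exact hoff i j hij
  calc (1 + μ) * ∑ i, z i ^ 2 - μ * (∑ i, |z i|) ^ 2
      = ∑ i, ∑ j, ((if i = j then (1 + μ) * z i ^ 2 else 0) - μ * (|z i| * |z j|)) := by
        simp only [sum_sub_distrib, sum_ite_eq, mem_univ, if_true, ← mul_sum, ← sum_mul]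
        ring
    _ ≤ ∑ i, ∑ j, z i * (G i j * z j) := sum_le_sum fun i _ => sum_le_sum fun j _ => hterm i j
    _ = z ⬝ᵥ (G *ᵥ z) := by simp only [dotProduct, mulVec, mul_sum]

lemma one_add_le_mul_sparseCount_of_mulVec_eq_zero {m n : ℕ} (A : Matrix (Fin m) (Fin n) ℝ)
    (hcols : ∀ j, ∑ i, A i j ^ 2 = 1) {μ : ℝ} (hμ₀ : 0 ≤ μ)
    (hμ : ∀ i j, i ≠ j → |∑ k, A k i * A k j| ≤ μ) {z : Fin n → ℝ} (hz : A *ᵥ z = 0)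
    (hz₀ : z ≠ 0) : 1 + μ ≤ μ * sparseCount z := by
  have hgram : z ⬝ᵥ ((Aᵀ * A) *ᵥ z) = 0 := by
    rw [← mulVec_mulVec, hz, mulVec_zero, dotProduct_zero]
  have hlower := le_dotProduct_mulVec_of_unit_diag_of_abs_offDiag_le (Aᵀ * A) μ
    (fun i => by simp only [mul_apply, transpose_apply, ← sq, hcols])
    (fun i j hij => by simpa only [mul_apply, transpose_apply] using hμ i j hij) z
  have hQ : 0 < ∑ i, z i ^ 2 := by
    obtain ⟨i, hi⟩ := Function.ne_iff.mp hz₀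
    exact sum_pos' (fun j _ => sq_nonneg (z j)) ⟨i, mem_univ i, sq_pos_of_ne_zero hi⟩
  refine le_of_mul_le_mul_right ?_ hQ
  calc (1 + μ) * ∑ i, z i ^ 2 ≤ μ * (∑ i, |z i|) ^ 2 := by linarith
    _ ≤ μ * (sparseCount z * ∑ i, z i ^ 2) :=
        mul_le_mul_of_nonneg_left (sq_sum_abs_le_sparseCount_mul_sum_sq z) hμ₀
    _ = μ * sparseCount z * ∑ i, z i ^ 2 := by ring

/-- If `K < (1/2)(1 + 1/μ(A))` then for each `y` there exists at most one
`K`-sparse vector `x` with `A x = y`. -/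
theorem unique_sparse_solution_of_coherence {m n K : ℕ} (A : Matrix (Fin m) (Fin n) ℝ)
    (hcols : ∀ j, (∑ i, (A i j) ^ 2) = 1)
    (μ : ℝ) (hμpos : 0 < μ)
    (hμ : IsGreatest {r : ℝ | ∃ i j : Fin n, i ≠ j ∧ r = |∑ k, A k i * A k j|} μ)
    (hK : (K : ℝ) < (1 / 2) * (1 + 1 / μ)) :
    ∀ (y : Fin m → ℝ) (x₁ x₂ : Fin n → ℝ),
      sparseCount x₁ ≤ K → sparseCount x₂ ≤ K →
      A.mulVec x₁ = y → A.mulVec x₂ = y → x₁ = x₂ := by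
  intro y x₁ x₂ h₁ h₂ hA₁ hA₂
  by_contra hne
  have hker : A *ᵥ (x₁ - x₂) = 0 := by rw [mulVec_sub, hA₁, hA₂, sub_self]
  have hspark := one_add_le_mul_sparseCount_of_mulVec_eq_zero A hcols hμpos.le
    (fun i j hij => hμ.2 ⟨i, j, hij, rfl⟩) hker (sub_ne_zero.mpr hne)
  have hsupp : (sparseCount (x₁ - x₂) : ℝ) ≤ 2 * K := by
    exact_mod_cast (sparseCount_sub_le x₁ x₂).trans (by omega)
  have hKμ : 2 * K * μ < 1 + μ := by
    field_simp at hK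
    linarith
  linarith [mul_le_mul_of_nonneg_left hsupp hμpos.le]
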